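/- Let α > 0 and let M₁, M₂ be invertible. The unit ball B₁^{α,M} = {(x,t) ∈ ℝ^q × ℝ^m : N_{α,M}(x,t) ≤ 1} is a convex subset of ℝ^{q+m} (with respect to the usual linear structure) if and only if α ≥ 2. -/

import Mathlib

open MeasureTheory Matrix

/-- Euclidean norm of a vector in `Fin n → ℝ`. -/
noncomputable def eNorm {n : ℕ} (v : Fin n → ℝ) : ℝ := Real.sqrt (∑ i, v i ^ 2)

/-- The homogeneous norm `N_{α,M}(x,t) = (|M₁x|^α + |M₂t|^{α/2})^{1/α}`. -/
noncomputable def homNorm {q m : ℕ} (α : ℝ) (M₁ : Matrix (Fin q) (Fin q) ℝ)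
    (M₂ : Matrix (Fin m) (Fin m) ℝ) (p : (Fin q → ℝ) × (Fin m → ℝ)) : ℝ :=
  (eNorm (M₁.mulVec p.1) ^ α + eNorm (M₂.mulVec p.2) ^ (α / 2)) ^ (1 / α)

/-- The ball `B_R^{α,M}`. -/
noncomputable def homBall {q m : ℕ} (α : ℝ) (M₁ : Matrix (Fin q) (Fin q) ℝ)
    (M₂ : Matrix (Fin m) (Fin m) ℝ) (R : ℝ) : Set ((Fin q → ℝ) × (Fin m → ℝ)) :=
  {p | homNorm α M₁ M₂ p ≤ R}

/-!
For `α ≥ 2` the function `N^α = |M₁x|^α + |M₂t|^{α/2}` is a sum of convex functions (powers with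
exponent `≥ 1` of seminorms), so its sublevel set `B₁` is convex. For `α < 2`, pick `x`, `t` with
`|M₁x| = |M₂t| = 1`; along the segment from `(x, 0)` to `(0, t)` one has
`N^α = (1 - s)^α + s^{α/2}`, and since `α/2 < 1` the second term beats the loss `1 - (1 - s)^α ≤ 2s`
for small `s`, so the segment leaves the ball.
-/

open Set

lemma eNorm_eq_norm_toLp {n : ℕ} (v : Fin n → ℝ) : eNorm v = ‖WithLp.toLp 2 v‖ := by
  simp [eNorm, EuclideanSpace.norm_eq]

lemma eNorm_nonneg {n : ℕ} (v : Fin n → ℝ) : 0 ≤ eNorm v := Real.sqrt_nonneg _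

@[simp]
lemma eNorm_zero {n : ℕ} : eNorm (0 : Fin n → ℝ) = 0 := by simp [eNorm]

lemma eNorm_smul {n : ℕ} (c : ℝ) (v : Fin n → ℝ) : eNorm (c • v) = |c| * eNorm v := by
  rw [eNorm_eq_norm_toLp, eNorm_eq_norm_toLp, WithLp.toLp_smul, norm_smul, Real.norm_eq_abs]

lemma exists_eNorm_mulVec_eq_one {n : ℕ} [NeZero n] {M : Matrix (Fin n) (Fin n) ℝ}
    (hM : IsUnit M.det) : ∃ v, eNorm (M *ᵥ v) = 1 := by
  refine ⟨M⁻¹ *ᵥ Pi.single 0 1, ?_⟩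
  rw [mulVec_mulVec, mul_nonsing_inv _ hM, one_mulVec, eNorm_eq_norm_toLp,
    PiLp.toLp_single, PiLp.norm_single, norm_one]

theorem convexOn_univ_norm_rpow {E : Type*} [SeminormedAddCommGroup E] [NormedSpace ℝ E]
    {p : ℝ} (hp : 1 ≤ p) : ConvexOn ℝ univ fun x : E => ‖x‖ ^ p := by
  refine ⟨convex_univ, fun x _ y _ a b ha hb hab => ?_⟩
  calc ‖a • x + b • y‖ ^ p ≤ (a * ‖x‖ + b * ‖y‖) ^ p := by
        gcongr
        simpa [norm_smul, abs_of_nonneg ha, abs_of_nonneg hb] using norm_add_le (a • x) (b • y)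
    _ ≤ a • ‖x‖ ^ p + b • ‖y‖ ^ p :=
        (convexOn_rpow hp).2 (norm_nonneg x) (norm_nonneg y) ha hb hab

lemma convexOn_univ_eNorm_mulVec_rpow {n : ℕ} (M : Matrix (Fin n) (Fin n) ℝ) {p : ℝ}
    (hp : 1 ≤ p) : ConvexOn ℝ univ fun v => eNorm (M *ᵥ v) ^ p := by
  simp only [eNorm_eq_norm_toLp]
  exact (convexOn_univ_norm_rpow hp).comp_linearMap
    ((WithLp.linearEquiv 2 ℝ (Fin n → ℝ)).symm.toLinearMap ∘ₗ M.mulVecLin)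

noncomputable def homNormRpow {q m : ℕ} (α : ℝ) (M₁ : Matrix (Fin q) (Fin q) ℝ)
    (M₂ : Matrix (Fin m) (Fin m) ℝ) (p : (Fin q → ℝ) × (Fin m → ℝ)) : ℝ :=
  eNorm (M₁ *ᵥ p.1) ^ α + eNorm (M₂ *ᵥ p.2) ^ (α / 2)

lemma homBall_one_eq {q m : ℕ} {α : ℝ} (hα : 0 < α) (M₁ : Matrix (Fin q) (Fin q) ℝ)
    (M₂ : Matrix (Fin m) (Fin m) ℝ) : homBall α M₁ M₂ 1 = {p | homNormRpow α M₁ M₂ p ≤ 1} := by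
  ext p
  rw [homBall, mem_ofPred_eq, homNorm, one_div, Real.rpow_inv_le_iff_of_pos
    (add_nonneg (Real.rpow_nonneg (eNorm_nonneg _) _) (Real.rpow_nonneg (eNorm_nonneg _) _))
    zero_le_one hα, Real.one_rpow, mem_ofPred_eq, homNormRpow]

lemma convexOn_univ_homNormRpow {q m : ℕ} {α : ℝ} (hα : 2 ≤ α)
    (M₁ : Matrix (Fin q) (Fin q) ℝ) (M₂ : Matrix (Fin m) (Fin m) ℝ) :
    ConvexOn ℝ univ (homNormRpow α M₁ M₂) :=
  ((convexOn_univ_eNorm_mulVec_rpow M₁ (by linarith)).comp_linearMap (LinearMap.fst ℝ _ _)).add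
    ((convexOn_univ_eNorm_mulVec_rpow M₂ (by linarith)).comp_linearMap (LinearMap.snd ℝ _ _))

lemma convex_homBall_one {q m : ℕ} {α : ℝ} (hα : 2 ≤ α)
    (M₁ : Matrix (Fin q) (Fin q) ℝ) (M₂ : Matrix (Fin m) (Fin m) ℝ) :
    Convex ℝ (homBall α M₁ M₂ 1) := by
  simpa [homBall_one_eq (by linarith : 0 < α)] using
    (convexOn_univ_homNormRpow hα M₁ M₂).convex_le 1

lemma exists_one_lt_one_sub_rpow_add_rpow {α : ℝ} (hα : α < 2) :
    ∃ s ∈ Ioo (0 : ℝ) 1, 1 < (1 - s) ^ α + s ^ (α / 2) := by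
  set β := 1 - α / 2 with hβdef
  have hβ : 0 < β := by linarith
  set s : ℝ := 4 ^ (-β⁻¹)
  have hs0 : 0 < s := by positivity
  have hs1 : s < 1 := Real.rpow_lt_one_of_one_lt_of_neg (by norm_num) (by simpa using hβ)
  refine ⟨s, ⟨hs0, hs1⟩, ?_⟩
  have hsβ : s ^ β = 4⁻¹ := by
    rw [← Real.rpow_mul (by norm_num), neg_mul, inv_mul_cancel₀ hβ.ne', Real.rpow_neg_one]
  have hpow : s ^ (α / 2) = 4 * s := by
    rw [show α / 2 = 1 - β by ring, Real.rpow_sub hs0, Real.rpow_one, hsβ]; ring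
  have hsq : (1 - s) ^ (2 : ℝ) ≤ (1 - s) ^ α :=
    Real.rpow_le_rpow_of_exponent_ge (by linarith) (by linarith) hα.le
  rw [Real.rpow_two] at hsq
  nlinarith

lemma not_convex_homBall_one {q m : ℕ} [NeZero q] [NeZero m] {α : ℝ} (hα : 0 < α) (hα2 : α < 2)
    {M₁ : Matrix (Fin q) (Fin q) ℝ} {M₂ : Matrix (Fin m) (Fin m) ℝ}
    (hM₁ : IsUnit M₁.det) (hM₂ : IsUnit M₂.det) : ¬Convex ℝ (homBall α M₁ M₂ 1) := by
  intro hconv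
  obtain ⟨x, hx⟩ := exists_eNorm_mulVec_eq_one hM₁
  obtain ⟨t, ht⟩ := exists_eNorm_mulVec_eq_one hM₂
  obtain ⟨s, ⟨hs0, hs1⟩, hlt⟩ := exists_one_lt_one_sub_rpow_add_rpow hα2
  rw [homBall_one_eq hα] at hconv
  have hA : (x, 0) ∈ {p | homNormRpow α M₁ M₂ p ≤ 1} := by
    simp [homNormRpow, hx, Real.zero_rpow (by positivity : α / 2 ≠ 0)]
  have hB : (0, t) ∈ {p | homNormRpow α M₁ M₂ p ≤ 1} := by
    simp [homNormRpow, ht, Real.zero_rpow hα.ne']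
  have hmid := hconv hA hB (sub_nonneg.2 hs1.le) hs0.le (sub_add_cancel 1 s)
  simp [homNormRpow, mulVec_smul, eNorm_smul, hx, ht, abs_of_pos hs0,
    abs_of_pos (sub_pos.2 hs1)] at hmid
  linarith

theorem homBall_convex_iff {q m : ℕ} (hq : 2 ≤ q) (hm : 1 ≤ m)
    (M₁ : Matrix (Fin q) (Fin q) ℝ) (M₂ : Matrix (Fin m) (Fin m) ℝ)
    (hM₁ : IsUnit M₁.det) (hM₂ : IsUnit M₂.det) (α : ℝ) (hα : 0 < α) :
    Convex ℝ (homBall α M₁ M₂ 1) ↔ 2 ≤ α := by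
  have : NeZero q := ⟨by omega⟩
  have : NeZero m := ⟨by omega⟩
  refine ⟨fun hconv => ?_, fun hα2 => convex_homBall_one hα2 M₁ M₂⟩
  by_contra! hα2
  exact not_convex_homBall_one hα hα2 hM₁ hM₂ hconv
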